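/- The k-means objective is weight-separable: let (X, d) be a finite set with a distance function d, let k satisfy 1 < k < |X|, and let S ⊆ X with 2 ≤ |S| ≤ k. Then there exists a weight function w on X such that every k-clustering C of X minimizing the k-means cost with respect to (w[X], d) places all elements of S in pairwise distinct clusters. -/

import Mathlib

/-!
Give the points of `S` a large weight `M` and all other points weight `1`. Extend `S` to a set
`T` of `k` points and cluster `X` into the singletons of `T`, with the rest of `X` attached to
one of them: every cluster contains at most one heavy point. Since a cluster weighs at least
`max (w x) (w y)`, a pair `x ≠ y` contributes at most `d(x,y)² · min (w x) (w y)` to the cost,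
so the cost of this clustering stays bounded as `M → ∞`. A cluster containing two points of `S`
costs at least `d(x,y)² M / (2|X|)`, which is unbounded, so for large `M` no optimal clustering
joins two points of `S`.
-/

open Finset

/-- A weight function assigns a positive real weight to every point. -/
def IsWeight {X : Type*} (w : X → ℝ) : Prop := ∀ x, 0 < w x

/-- A k-clustering: a partition of `X` into `k` pairwise disjoint nonempty parts. -/
def IsClustering {X : Type*} [Fintype X] [DecidableEq X]
    (C : Finset (Finset X)) (k : ℕ) : Prop :=
  C.card = k ∧ (∀ A ∈ C, A.Nonempty) ∧
  (∀ A ∈ C, ∀ B ∈ C, A ≠ B → Disjoint A B) ∧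
  (∀ x : X, ∃ A ∈ C, x ∈ A)

/-- `x ∼_C y`: `x` and `y` lie in the same cluster of `C`. -/
def SameCluster {X : Type*} [DecidableEq X] (C : Finset (Finset X)) (x y : X) : Prop :=
  ∃ A ∈ C, x ∈ A ∧ y ∈ A

/-- The k-means cost of a clustering `C` of weighted data `(w[X], d)`: for each cluster, the
sum over unordered pairs of distinct points of `d(x,y)² w(x) w(y)` (written as half the sum
over ordered pairs of distinct points), divided by the cluster weight. -/
noncomputable def kmeansCost {X : Type*} [DecidableEq X]
    (C : Finset (Finset X)) (w : X → ℝ) (d : X → X → ℝ) : ℝ :=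
  ∑ A ∈ C, ((1 / 2) * ∑ p ∈ A.offDiag, d p.1 p.2 ^ 2 * w p.1 * w p.2) / (∑ x ∈ A, w x)

/-- The min-sum cost of a clustering `C` of weighted data `(w[X], d)`: the sum over clusters
of the sum over unordered pairs of distinct points of `d(x,y) w(x) w(y)`. -/
noncomputable def minSumCost {X : Type*} [DecidableEq X]
    (C : Finset (Finset X)) (w : X → ℝ) (d : X → X → ℝ) : ℝ :=
  ∑ A ∈ C, (1 / 2) * ∑ p ∈ A.offDiag, d p.1 p.2 * w p.1 * w p.2

section Fibers

variable {X Y : Type*} [Fintype X] [DecidableEq X] [DecidableEq Y]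

def fibers (g : X → Y) : Finset (Finset X) :=
  (univ.image g).image fun t => univ.filter (g · = t)

lemma mem_fibers {g : X → Y} {A : Finset X} :
    A ∈ fibers g ↔ ∃ x, univ.filter (g · = g x) = A := by
  simp [fibers]

lemma isClustering_fibers (g : X → Y) : IsClustering (fibers g) (univ.image g).card := by
  refine ⟨card_image_of_injOn ?_, ?_, ?_, fun x => ⟨_, mem_fibers.2 ⟨x, rfl⟩, by simp⟩⟩
  · intro t ht t' _ h
    obtain ⟨a, -, rfl⟩ := mem_image.1 ht
    have : a ∈ univ.filter (g · = t') := by simp only at h; rw [← h]; simp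
    simpa using this
  · intro A hA
    obtain ⟨a, rfl⟩ := mem_fibers.1 hA
    exact ⟨a, by simp⟩
  · intro A hA B hB h
    obtain ⟨a, rfl⟩ := mem_fibers.1 hA
    obtain ⟨b, rfl⟩ := mem_fibers.1 hB
    exact disjoint_filter.2 fun x _ hx hx' => h (by rw [← hx, ← hx'])

lemma SameCluster.apply_eq_of_fibers {g : X → Y} {x y : X} (h : SameCluster (fibers g) x y) :
    g x = g y := by
  obtain ⟨A, hA, hx, hy⟩ := h
  obtain ⟨a, rfl⟩ := mem_fibers.1 hA
  simp only [mem_filter] at hx hy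
  rw [hx.2, hy.2]

end Fibers

lemma exists_isClustering_separating {X : Type*} [Fintype X] [DecidableEq X] {S : Finset X}
    {k : ℕ} (hS : S.card ≤ k) (hk : k ≤ Fintype.card X) (hk0 : 0 < k) :
    ∃ C, IsClustering C k ∧ ∀ x ∈ S, ∀ y ∈ S, SameCluster C x y → x = y := by
  obtain ⟨T, hST, -, hT⟩ := exists_subsuperset_card_eq (subset_univ S) hS (by simpa using hk)
  obtain ⟨t₀, ht₀⟩ : T.Nonempty := card_pos.1 (hT ▸ hk0)
  set g : X → X := fun x => if x ∈ T then x else t₀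
  have hg : univ.image g = T := by
    ext x
    refine ⟨?_, fun hx => mem_image.2 ⟨x, mem_univ x, if_pos hx⟩⟩
    intro hx
    obtain ⟨a, -, rfl⟩ := mem_image.1 hx
    by_cases ha : a ∈ T <;> simp [g, ha, ht₀]
  refine ⟨fibers g, hT ▸ hg ▸ isClustering_fibers g, fun x hx y hy hxy => ?_⟩
  simpa [g, hST hx, hST hy] using hxy.apply_eq_of_fibers

section ClusterCost

variable {X : Type*} {A : Finset X} {w : X → ℝ} {d : X → X → ℝ}

noncomputable def clusterCost (A : Finset X) (w : X → ℝ) (d : X → X → ℝ) : ℝ :=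
  (1 / 2 * ∑ p ∈ A.offDiag, d p.1 p.2 ^ 2 * w p.1 * w p.2) / ∑ x ∈ A, w x

lemma kmeansCost_eq_sum_clusterCost [DecidableEq X] (C : Finset (Finset X)) :
    kmeansCost C w d = ∑ A ∈ C, clusterCost A w d := rfl

lemma clusterCost_nonneg (hw : ∀ z, 0 ≤ w z) : 0 ≤ clusterCost A w d := by
  unfold clusterCost
  exact div_nonneg (mul_nonneg (by norm_num) (sum_nonneg fun p _ => by
    have := hw p.1; have := hw p.2; positivity)) (sum_nonneg fun z _ => hw z)

lemma sq_mul_mul_div_le_clusterCost (hw : ∀ z, 0 ≤ w z) {x y : X} (hx : x ∈ A) (hy : y ∈ A)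
    (hxy : x ≠ y) : d x y ^ 2 * w x * w y / (2 * ∑ z ∈ A, w z) ≤ clusterCost A w d := by
  rw [clusterCost, ← div_div, div_eq_mul_one_div _ (2 : ℝ), mul_comm]
  gcongr
  · exact sum_nonneg fun z _ => hw z
  · have hxy : (x, y) ∈ A.offDiag := mem_offDiag.2 ⟨hx, hy, hxy⟩
    exact single_le_sum (f := fun p : X × X => d p.1 p.2 ^ 2 * w p.1 * w p.2)
      (fun p _ => by have := hw p.1; have := hw p.2; positivity) hxy

lemma clusterCost_le_half_sum_mul_min (hw : ∀ z, 0 < w z) :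
    clusterCost A w d ≤ 1 / 2 * ∑ p ∈ A.offDiag, d p.1 p.2 ^ 2 * min (w p.1) (w p.2) := by
  rcases A.eq_empty_or_nonempty with rfl | hA
  · simp [clusterCost]
  have hW : 0 < ∑ z ∈ A, w z := sum_pos (fun z _ => hw z) hA
  rw [clusterCost, div_le_iff₀ hW, mul_assoc, sum_mul]
  refine mul_le_mul_of_nonneg_left (sum_le_sum fun p hp => ?_) (by norm_num)
  obtain ⟨h1, h2, -⟩ := mem_offDiag.1 hp
  have hmax : max (w p.1) (w p.2) ≤ ∑ z ∈ A, w z :=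
    max_le (single_le_sum (fun z _ => (hw z).le) h1) (single_le_sum (fun z _ => (hw z).le) h2)
  calc d p.1 p.2 ^ 2 * w p.1 * w p.2
      = d p.1 p.2 ^ 2 * (min (w p.1) (w p.2) * max (w p.1) (w p.2)) := by rw [min_mul_max]; ring
    _ ≤ d p.1 p.2 ^ 2 * (min (w p.1) (w p.2) * ∑ z ∈ A, w z) := by
      gcongr
      exact le_min (hw _).le (hw _).le
    _ = d p.1 p.2 ^ 2 * min (w p.1) (w p.2) * ∑ z ∈ A, w z := by ring

end ClusterCost

section KMeansCost

variable {X : Type*} [DecidableEq X] {C : Finset (Finset X)} {w : X → ℝ} {d : X → X → ℝ}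

lemma kmeansCost_le_of_min_le_one (hw : ∀ z, 0 < w z)
    (hC : ∀ A ∈ C, ∀ x ∈ A, ∀ y ∈ A, x ≠ y → min (w x) (w y) ≤ 1) :
    kmeansCost C w d ≤ ∑ A ∈ C, 1 / 2 * ∑ p ∈ A.offDiag, d p.1 p.2 ^ 2 := by
  rw [kmeansCost_eq_sum_clusterCost]
  refine sum_le_sum fun A hA => (clusterCost_le_half_sum_mul_min hw).trans ?_
  gcongr with p hp
  obtain ⟨h1, h2, h12⟩ := mem_offDiag.1 hp
  exact mul_le_of_le_one_right (sq_nonneg _) (hC A hA _ h1 _ h2 h12)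

lemma le_kmeansCost_of_sameCluster [Fintype X] {M : ℝ} (hw : ∀ z, 0 < w z)
    (hwM : ∀ z, w z ≤ M) {x y : X} (hx : w x = M) (hy : w y = M) (hxy : x ≠ y)
    (h : SameCluster C x y) :
    d x y ^ 2 * M / (2 * Fintype.card X) ≤ kmeansCost C w d := by
  obtain ⟨A, hA, hxA, hyA⟩ := h
  have hM : 0 < M := hx ▸ hw x
  have hW : ∑ z ∈ A, w z ≤ Fintype.card X * M :=
    (sum_le_card_nsmul A w M fun z _ => hwM z).trans
      (by rw [nsmul_eq_mul]; gcongr; exact_mod_cast card_le_univ A)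
  calc d x y ^ 2 * M / (2 * Fintype.card X)
      = d x y ^ 2 * w x * w y / (2 * (Fintype.card X * M)) := by
        rw [hx, hy]; field_simp
    _ ≤ d x y ^ 2 * w x * w y / (2 * ∑ z ∈ A, w z) := by
        gcongr
        · rw [hx, hy]; positivity
        · exact mul_pos two_pos (sum_pos (fun z _ => hw z) ⟨x, hxA⟩)
    _ ≤ clusterCost A w d := sq_mul_mul_div_le_clusterCost (fun z => (hw z).le) hxA hyA hxy
    _ ≤ kmeansCost C w d :=
        single_le_sum (f := fun B => clusterCost B w d)
          (fun B _ => clusterCost_nonneg fun z => (hw z).le) hA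

end KMeansCost

theorem kmeans_weight_separable_general
    {X : Type*} [Fintype X] [DecidableEq X]
    (d : X → X → ℝ)
    (hzero : ∀ x y, d x y = 0 ↔ x = y)
    (k : ℕ) (hk1 : 1 < k) (hk2 : k < Fintype.card X)
    (S : Finset X) (hS2 : S.card ≤ k) :
    ∃ w : X → ℝ, IsWeight w ∧
      ∀ C : Finset (Finset X), IsClustering C k →
        (∀ C' : Finset (Finset X), IsClustering C' k →
          kmeansCost C w d ≤ kmeansCost C' w d) →
        ∀ x ∈ S, ∀ y ∈ S, x ≠ y → ¬ SameCluster C x y := by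
  obtain ⟨C₀, hC₀, hsep⟩ := exists_isClustering_separating hS2 hk2.le (by omega)
  set K := ∑ A ∈ C₀, 1 / 2 * ∑ p ∈ A.offDiag, d p.1 p.2 ^ 2
  have hX : (0 : ℝ) < 2 * Fintype.card X := by
    have : 0 < Fintype.card X := by omega
    positivity
  obtain ⟨M, hM, hMK⟩ : ∃ M : ℝ, 1 ≤ M ∧
      ∀ p ∈ S.offDiag, K < d p.1 p.2 ^ 2 * M / (2 * Fintype.card X) := by
    refine ((Filter.eventually_ge_atTop 1).and
      ((Filter.eventually_all_finset _).2 fun p hp => ?_)).exists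
    have hd : 0 < d p.1 p.2 ^ 2 := by
      obtain ⟨-, -, hne⟩ := mem_offDiag.1 hp
      exact sq_pos_of_ne_zero (by rw [Ne, hzero]; exact hne)
    exact ((Filter.tendsto_id.const_mul_atTop hd).atTop_div_const hX).eventually_gt_atTop K
  set w : X → ℝ := fun x => if x ∈ S then M else 1
  have hw : ∀ z, 0 < w z := fun z => by unfold w; split_ifs <;> linarith
  refine ⟨w, hw, fun C _ hopt x hx y hy hxy hsame => ?_⟩
  have hC₀K : kmeansCost C₀ w d ≤ K := by
    refine kmeansCost_le_of_min_le_one hw fun A hA a ha b hb hab => ?_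
    by_cases haS : a ∈ S
    · have hbS : b ∉ S := fun hbS => hab (hsep a haS b hbS ⟨A, hA, ha, hb⟩)
      exact (min_le_right _ _).trans (by simp [w, hbS])
    · exact (min_le_left _ _).trans (by simp [w, haS])
  have hCM := le_kmeansCost_of_sameCluster (d := d) hw
    (fun z => by unfold w; split_ifs <;> linarith) (if_pos hx) (if_pos hy) hxy hsame
  linarith [hopt C₀ hC₀, hMK (x, y) (mem_offDiag.2 ⟨hx, hy, hxy⟩)]

/-- the k-means objective is weight-separable: for any `S ⊆ X` with
`2 ≤ |S| ≤ k` there is a weight function such that every k-clustering minimizing the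
k-means cost places all elements of `S` in pairwise distinct clusters. -/
theorem kmeans_weight_separable
    {X : Type*} [Fintype X] [DecidableEq X]
    (d : X → X → ℝ) (hsym : ∀ x y, d x y = d y x) (hnn : ∀ x y, 0 ≤ d x y)
    (hzero : ∀ x y, d x y = 0 ↔ x = y)
    (k : ℕ) (hk1 : 1 < k) (hk2 : k < Fintype.card X)
    (S : Finset X) (hS1 : 2 ≤ S.card) (hS2 : S.card ≤ k) :
    ∃ w : X → ℝ, IsWeight w ∧
      ∀ C : Finset (Finset X), IsClustering C k →
        (∀ C' : Finset (Finset X), IsClustering C' k →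
          kmeansCost C w d ≤ kmeansCost C' w d) →
        ∀ x ∈ S, ∀ y ∈ S, x ≠ y → ¬ SameCluster C x y :=
  kmeans_weight_separable_general d hzero k hk1 hk2 S hS2
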